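/- For all V, V' ∈ Mat_{ν,r}(ℂ), the matrix commutator satisfies [ι(0,0,V,0), ι(0,0,V',0)] = ι(0, 0, 0, 4·Im Q(V,V')), where 4·Im Q(V,V') = Im(V·conj(V'ᵀ) + conj(V')·Vᵀ) is a real symmetric ν×ν matrix. -/

import Mathlib

open Matrix

/-- The block-matrix embedding `ι(T,K,V,U) ∈ Mat_{2(ν+r)}(ℝ)`, with row/column block
sizes `(r, ν, r, ν)`:
`[[Re K, 0, −Im K, Re Vᵀ], [Im V, T, Re V, U], [Im K, 0, Re K, −Im Vᵀ], [0,0,0,−Tᵀ]]`. -/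
def iota (ν r : ℕ) (T : Matrix (Fin ν) (Fin ν) ℝ) (K : Matrix (Fin r) (Fin r) ℂ)
    (V : Matrix (Fin ν) (Fin r) ℂ) (U : Matrix (Fin ν) (Fin ν) ℝ) :
    Matrix ((Fin r ⊕ Fin ν) ⊕ (Fin r ⊕ Fin ν)) ((Fin r ⊕ Fin ν) ⊕ (Fin r ⊕ Fin ν)) ℝ :=
  Matrix.fromBlocks
    (Matrix.fromBlocks (K.map Complex.re) 0 (V.map Complex.im) T)
    (Matrix.fromBlocks (-(K.map Complex.im)) (Vᵀ.map Complex.re) (V.map Complex.re) U)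
    (Matrix.fromBlocks (K.map Complex.im) 0 0 0)
    (Matrix.fromBlocks (K.map Complex.re) (-(Vᵀ.map Complex.im)) 0 (-Tᵀ))

/-- The Lie algebra `g̃`: the set of all matrices `ι(T,K,V,U)` with
`T ∈ gl(ν,ℝ)`, `K ∈ u(r)` (skew-Hermitian), `V ∈ Mat_{ν,r}(ℂ)`, `U ∈ Sym_ν(ℝ)`. -/
def gtilde (ν r : ℕ) :
    Set (Matrix ((Fin r ⊕ Fin ν) ⊕ (Fin r ⊕ Fin ν)) ((Fin r ⊕ Fin ν) ⊕ (Fin r ⊕ Fin ν)) ℝ) :=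
  {X | ∃ T K V U, Kᴴ = -K ∧ U.IsSymm ∧ X = iota ν r T K V U}

/-- The Hermitian map `Q(U,V) := (U·conj(Vᵀ) + conj(V)·Uᵀ)/4`. -/
noncomputable def Qmap (ν r : ℕ) (U V : Matrix (Fin ν) (Fin r) ℂ) :
    Matrix (Fin ν) (Fin ν) ℂ :=
  (4 : ℂ)⁻¹ • (U * (V.map (starRingEnd ℂ))ᵀ + V.map (starRingEnd ℂ) * Uᵀ)

/-!
With blocks ordered `(r, ν, r, ν)`, the `V`-part of `ι` maps the last `ν`-block into the two
`r`-blocks and these into the first `ν`-block, so a product of two such matrices is supported on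
the `U`-block, with entry `Im V · Re V'ᵀ − Re V · Im V'ᵀ`. Antisymmetrising in `(V, V')` gives
the imaginary part of `V · conj V'ᵀ + conj V' · Vᵀ`, which is of the form `X + Xᵀ`, hence
symmetric.
-/

namespace Matrix

variable {m n : Type*}

theorem map_re_map_conj (A : Matrix m n ℂ) :
    (A.map (starRingEnd ℂ)).map Complex.re = A.map Complex.re := by
  ext i j
  simp

theorem map_im_map_conj (A : Matrix m n ℂ) :
    (A.map (starRingEnd ℂ)).map Complex.im = -A.map Complex.im := by
  ext i j
  simp

theorem map_im_mul {l : Type*} [Fintype n] (A : Matrix m n ℂ) (B : Matrix n l ℂ) :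
    (A * B).map Complex.im =
      A.map Complex.re * B.map Complex.im + A.map Complex.im * B.map Complex.re := by
  ext i j
  simp [mul_apply, Complex.im_sum, Finset.sum_add_distrib]

theorem map_im_mul_conj_transpose_add [Fintype n] (A B : Matrix m n ℂ) :
    (A * (B.map (starRingEnd ℂ))ᵀ + B.map (starRingEnd ℂ) * Aᵀ).map Complex.im =
      A.map Complex.im * (B.map Complex.re)ᵀ - A.map Complex.re * (B.map Complex.im)ᵀ -
        (B.map Complex.im * (A.map Complex.re)ᵀ - B.map Complex.re * (A.map Complex.im)ᵀ) := by
  rw [Matrix.map_add _ Complex.add_im, map_im_mul, map_im_mul]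
  simp only [transpose_map, map_im_map_conj, map_re_map_conj, transpose_neg, Matrix.mul_neg,
    Matrix.neg_mul]
  abel

theorem isSymm_mul_transpose_add_mul_transpose {α : Type*} [CommSemiring α] [Fintype n]
    (A B : Matrix m n α) : (A * Bᵀ + B * Aᵀ).IsSymm := by
  simpa only [transpose_mul, transpose_transpose] using isSymm_add_transpose_self (A * Bᵀ)

end Matrix

theorem four_smul_map_im_Qmap (ν r : ℕ) (V W : Matrix (Fin ν) (Fin r) ℂ) :
    (4 : ℝ) • (Qmap ν r V W).map Complex.im =
      (V * (W.map (starRingEnd ℂ))ᵀ + W.map (starRingEnd ℂ) * Vᵀ).map Complex.im := by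
  ext i j
  simp [Qmap]
  ring

theorem iota_sub (ν r : ℕ) (T T' : Matrix (Fin ν) (Fin ν) ℝ)
    (K K' : Matrix (Fin r) (Fin r) ℂ) (V V' : Matrix (Fin ν) (Fin r) ℂ) (U U' : Matrix (Fin ν) (Fin ν) ℝ) :
    iota ν r T K V U - iota ν r T' K' V' U' = iota ν r (T - T') (K - K') (V - V') (U - U') := by
  ext (i | i) (j | j) <;> rcases i with i | i <;> rcases j with j | j <;> simp [iota] <;> ring

theorem iota_V_mul_iota_V (ν r : ℕ) (V W : Matrix (Fin ν) (Fin r) ℂ) :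
    iota ν r 0 0 V 0 * iota ν r 0 0 W 0 =
      iota ν r 0 0 0
        (V.map Complex.im * (W.map Complex.re)ᵀ - V.map Complex.re * (W.map Complex.im)ᵀ) := by
  simp [iota, fromBlocks_multiply, fromBlocks_add, sub_eq_add_neg, transpose_map]

theorem iota_heisenberg_bracket_general (ν r : ℕ)
    (V V' : Matrix (Fin ν) (Fin r) ℂ) :
    iota ν r 0 0 V 0 * iota ν r 0 0 V' 0 - iota ν r 0 0 V' 0 * iota ν r 0 0 V 0 =
      iota ν r 0 0 0 ((4 : ℝ) • (Qmap ν r V V').map Complex.im) ∧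
    (4 : ℝ) • (Qmap ν r V V').map Complex.im =
      (V * (V'.map (starRingEnd ℂ))ᵀ + V'.map (starRingEnd ℂ) * Vᵀ).map Complex.im ∧
    ((4 : ℝ) • (Qmap ν r V V').map Complex.im).IsSymm := by
  have hQ := four_smul_map_im_Qmap ν r V V'
  refine ⟨?_, hQ, ?_⟩
  · rw [iota_V_mul_iota_V, iota_V_mul_iota_V, iota_sub, hQ, map_im_mul_conj_transpose_add,
      sub_self, sub_self, sub_self]
  · rw [hQ]
    exact (isSymm_mul_transpose_add_mul_transpose _ _).map _

/-- `[ι(0,0,V,0), ι(0,0,V',0)] = ι(0,0,0, 4·Im Q(V,V'))`, where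
`4·Im Q(V,V') = Im(V·conj(V'ᵀ) + conj(V')·Vᵀ)` is a real symmetric matrix. -/
theorem iota_heisenberg_bracket (ν r : ℕ) (hν : 0 < ν) (hr : 0 < r)
    (V V' : Matrix (Fin ν) (Fin r) ℂ) :
    iota ν r 0 0 V 0 * iota ν r 0 0 V' 0 - iota ν r 0 0 V' 0 * iota ν r 0 0 V 0 =
      iota ν r 0 0 0 ((4 : ℝ) • (Qmap ν r V V').map Complex.im) ∧
    (4 : ℝ) • (Qmap ν r V V').map Complex.im =
      (V * (V'.map (starRingEnd ℂ))ᵀ + V'.map (starRingEnd ℂ) * Vᵀ).map Complex.im ∧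
    ((4 : ℝ) • (Qmap ν r V V').map Complex.im).IsSymm :=
  iota_heisenberg_bracket_general ν r V V'
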